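/- There exist a convex triangular grid G and a concave cocirculation h in G such that h is not integer-valued and h is the unique concave cocirculation in G agreeing with h on the set F = {e ∈ E(G) : h(e) ∈ ℤ} (i.e., C(G, h|_F) = {h}). In particular, there is no integer concave cocirculation h' in G with h'(e)=h(e) for every edge e on which h takes an integer value. -/

import Mathlib

open scoped BigOperators

attribute [local instance] Classical.propDecidable

noncomputable section

/-- Points of the plane. -/
abbrev Pt : Type := ℝ × ℝ

/-- Directed edges: ordered pairs of points. -/
abbrev Ed : Type := Pt × Pt

/-- The three generating vectors ξ₁ = (1,0), ξ₂ = (−1/2, √3/2), ξ₃ = (−1/2, −√3/2). -/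
noncomputable def xiv : Fin 3 → Pt
  | 0 => ((1 : ℝ), (0 : ℝ))
  | 1 => (-(1 / 2 : ℝ), Real.sqrt 3 / 2)
  | 2 => (-(1 / 2 : ℝ), -(Real.sqrt 3 / 2))

/-- A little (lattice) triangle of the triangular grid, given by its base point and
its orientation (`up = true` for an upward triangle). -/
structure GridTriangle : Type where
  base : Pt
  up : Bool

noncomputable def GridTriangle.v0 (T : GridTriangle) : Pt := T.base
noncomputable def GridTriangle.v1 (T : GridTriangle) : Pt := T.base + xiv 0
noncomputable def GridTriangle.v2 (T : GridTriangle) : Pt :=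
  if T.up then T.base + xiv 0 + xiv 1 else T.base + xiv 0 + xiv 2

/-- The three directed edges of the 3-circuit surrounding a little triangle;
each has direction ξ₁, ξ₂ or ξ₃. -/
noncomputable def GridTriangle.e0 (T : GridTriangle) : Ed := (T.v0, T.v1)
noncomputable def GridTriangle.e1 (T : GridTriangle) : Ed := (T.v1, T.v2)
noncomputable def GridTriangle.e2 (T : GridTriangle) : Ed := (T.v2, T.v0)

noncomputable def GridTriangle.edgeFinset (T : GridTriangle) : Finset Ed := {T.e0, T.e1, T.e2}

/-- The closed region spanned by a little triangle. -/
noncomputable def GridTriangle.region (T : GridTriangle) : Set Pt :=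
  convexHull ℝ {T.v0, T.v1, T.v2}

/-- Vectors of the lattice generated by ξ₁ and ξ₂. -/
def IsLatticeVec (p : Pt) : Prop := ∃ m n : ℤ, p = (m : ℝ) • xiv 0 + (n : ℝ) • xiv 1

/-- A convex triangular grid: a finite nonempty set of little triangles of a common
translate of the triangular lattice whose union is a convex polygon.  (Its vertices,
edges, bounded faces and boundary are then those of the planar digraph formed by the
edges of the little triangles.) -/
structure ConvexGrid : Type where
  tris : Finset GridTriangle
  nonempty : tris.Nonempty
  aligned : ∀ T ∈ tris, ∀ T' ∈ tris, IsLatticeVec (T.base - T'.base)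
  convex : Convex ℝ (⋃ T ∈ tris, GridTriangle.region T)

/-- The region R(G) spanned by the grid. -/
noncomputable def ConvexGrid.region (G : ConvexGrid) : Set Pt :=
  ⋃ T ∈ G.tris, GridTriangle.region T

/-- The (directed) edge set E(G) of the grid. -/
noncomputable def ConvexGrid.edges (G : ConvexGrid) : Finset Ed :=
  G.tris.biUnion GridTriangle.edgeFinset

/-- The boundary edges B(G): edges lying in exactly one little triangle. -/
noncomputable def ConvexGrid.boundary (G : ConvexGrid) : Finset Ed :=
  G.edges.filter fun e => (G.tris.filter fun T => e ∈ T.edgeFinset).card = 1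

/-- A cocirculation: `h(e)+h(e')+h(e'')=0` around each little triangle. -/
def IsCocirculation (G : ConvexGrid) (h : Ed → ℝ) : Prop :=
  ∀ T ∈ G.tris, h T.e0 + h T.e1 + h T.e2 = 0

/-- `g` coincides with an affine function on `S`. -/
def AffineOn (g : Pt → ℝ) (S : Set Pt) : Prop :=
  ∃ φ : Pt →ᵃ[ℝ] ℝ, ∀ x ∈ S, g x = φ x

/-- A concave cocirculation: a cocirculation induced by a concave function on R(G)
which is affinely linear within each little triangle. -/
def IsConcaveCocirculation (G : ConvexGrid) (h : Ed → ℝ) : Prop :=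
  IsCocirculation G h ∧
  ∃ g : Pt → ℝ, ConcaveOn ℝ G.region g ∧ (∀ T ∈ G.tris, AffineOn g T.region) ∧
    ∀ e ∈ G.edges, h e = g e.2 - g e.1

/-- The polyhedron C(G,h₀) of concave cocirculations agreeing with h₀ on F. -/
def CC (G : ConvexGrid) (F : Set Ed) (h₀ : Ed → ℝ) : Set (Ed → ℝ) :=
  {h | IsConcaveCocirculation G h ∧ ∀ e ∈ F, h e = h₀ e}

/-- `h` is a vertex (extreme point) of the set `C` of cocirculations, regarded as a
subset of ℝ^{E(G)} (only the coordinates on the edges of `G` matter). -/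
def IsVertexOf (G : ConvexGrid) (C : Set (Ed → ℝ)) (h : Ed → ℝ) : Prop :=
  h ∈ C ∧ ∀ h₁ ∈ C, ∀ h₂ ∈ C,
    (∀ e ∈ G.edges, h e = (h₁ e + h₂ e) / 2) → ∀ e ∈ G.edges, h₁ e = h₂ e


/-!
In lattice coordinates `(α, β)`, standing for the point `α ξ₁ + β ξ₂`, the grid is the hexagon
`0 ≤ α ≤ 3, 0 ≤ β ≤ 2, -1 ≤ α - β ≤ 2` cut into ten little triangles, and `h` is the cocirculation
of the minimum `g` of eight affine functions, each of which coincides with `g` on some of the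
triangles. Since `g(1,1) = 1/2`, `h` is not integral. The edges on which `h` is integral join the
vertices `(0,0), (0,1), (1,0), (1,2), (2,1)` among themselves and the vertices
`(1,1), (2,0), (2,2), (3,1), (3,2)` among themselves, so if `h'` agrees with `h` there, its
potential `g'` satisfies `g' - g = c` on the first class and `g' - g = c'` on the second. As `g` is
affine on the rhombi `(1,0), (2,0), (2,1), (1,1)` and `(1,1), (2,1), (2,2), (1,2)`, concavity of
`g'` across their short diagonals gives `c' ≤ c` and `c ≤ c'`. Hence `g' - g` is constant on all
vertices, and `h' = h`.
-/

section ConcaveAffine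

variable {E : Type*} [AddCommGroup E] [Module ℝ E]

lemma AffineMap.concaveOn_univ (φ : E →ᵃ[ℝ] ℝ) : ConcaveOn ℝ Set.univ φ :=
  ⟨convex_univ, fun _ _ _ _ _ _ _ _ hab => (Convex.combo_affine_apply hab).ge⟩

lemma Finset.concaveOn_inf'_affineMap (s : Finset (E →ᵃ[ℝ] ℝ)) (hs : s.Nonempty) :
    ConcaveOn ℝ Set.univ fun z => s.inf' hs fun φ => φ z := by
  simp_rw [← Finset.inf'_apply]
  exact Finset.inf'_induction hs _ (fun _ hf _ hg => hf.inf hg) fun φ _ => φ.concaveOn_univ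

lemma ConcaveOn.eqOn_convexHull_of_le {g : E → ℝ} (hg : ConcaveOn ℝ Set.univ g)
    {φ : E →ᵃ[ℝ] ℝ} (hle : ∀ z, g z ≤ φ z) {S : Set E} (hS : Set.EqOn g φ S) :
    Set.EqOn g φ (convexHull ℝ S) := by
  have hconv : Convex ℝ {z | φ z ≤ g z} := by
    simpa [← sub_eq_add_neg, sub_nonneg] using (hg.add (-φ).concaveOn_univ).convex_ge 0
  exact fun z hz => (hle z).antisymm (convexHull_min (fun v hv => (hS hv).ge) hconv hz)

lemma add_add_smul_mem_convexHull {x y z : E} {a b c : ℝ} (ha : 0 ≤ a) (hb : 0 ≤ b) (hc : 0 ≤ c)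
    (habc : a + b + c = 1) : a • x + b • y + c • z ∈ convexHull ℝ {x, y, z} := by
  have := (convex_convexHull ℝ {x, y, z}).sum_mem (t := Finset.univ) (w := ![a, b, c])
    (z := ![x, y, z]) (by simp [Fin.forall_fin_succ, ha, hb, hc])
    (by simp [Fin.sum_univ_three, habc])
    fun i _ => subset_convexHull ℝ _ (by fin_cases i <;> simp)
  simpa [Fin.sum_univ_three, add_assoc] using this

end ConcaveAffine

lemma ConcaveOn.add_le_of_affineOn {R S : Set Pt} {g : Pt → ℝ} (hg : ConcaveOn ℝ R g)
    (hgS : AffineOn g S) (hS : Convex ℝ S) {u v p q : Pt} (hu : u ∈ S) (hv : v ∈ S) (hp : p ∈ R)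
    (hq : q ∈ R) (hpq : p + q = u + v) : g p + g q ≤ g u + g v := by
  obtain ⟨φ, hφ⟩ := hgS
  have hmid : (1 / 2 : ℝ) • p + (1 / 2 : ℝ) • q = (1 / 2 : ℝ) • u + (1 / 2 : ℝ) • v := by
    rw [← smul_add, ← smul_add, hpq]
  have hmidS := hS hu hv (by norm_num) (by norm_num) (by norm_num : (1 / 2 : ℝ) + 1 / 2 = 1)
  have := hg.2 hp hq (by norm_num) (by norm_num) (by norm_num : (1 / 2 : ℝ) + 1 / 2 = 1)
  rw [hmid, hφ _ hmidS, Convex.combo_affine_apply (by norm_num), ← hφ _ hu, ← hφ _ hv] at this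
  simp only [smul_eq_mul] at this
  linarith

lemma ConvexGrid.sub_eq_sub_of_eq_add_const {G : ConvexGrid} {g g' : Pt → ℝ} {c : ℝ}
    (h : ∀ T ∈ G.tris, ∀ v ∈ ({T.v0, T.v1, T.v2} : Set Pt), g' v = g v + c) :
    ∀ e ∈ G.edges, g' e.2 - g' e.1 = g e.2 - g e.1 := by
  intro e he
  obtain ⟨T, hT, heT⟩ := Finset.mem_biUnion.1 he
  have hv := h T hT
  simp only [Set.mem_insert_iff, Set.mem_singleton_iff, forall_eq_or_imp, forall_eq] at hv
  obtain ⟨h0, h1, h2⟩ := hv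
  simp only [GridTriangle.edgeFinset, Finset.mem_insert, Finset.mem_singleton] at heT
  rcases heT with rfl | rfl | rfl <;>
    simp only [GridTriangle.e0, GridTriangle.e1, GridTriangle.e2, h0, h1, h2] <;> ring

def latticePt (i j : ℝ) : Pt := i • xiv 0 + j • xiv 1

/-- The coordinates `α, β` of `z = α ξ₁ + β ξ₂`. -/
def latticeA : Pt →ₗ[ℝ] ℝ := LinearMap.fst ℝ ℝ ℝ + (Real.sqrt 3)⁻¹ • LinearMap.snd ℝ ℝ ℝ
def latticeB : Pt →ₗ[ℝ] ℝ := (2 / Real.sqrt 3) • LinearMap.snd ℝ ℝ ℝ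

lemma latticeA_apply (z : Pt) : latticeA z = z.1 + (Real.sqrt 3)⁻¹ * z.2 := rfl

lemma latticeB_apply (z : Pt) : latticeB z = 2 / Real.sqrt 3 * z.2 := rfl

lemma latticePt_eq (i j : ℝ) : latticePt i j = (i - j / 2, j * Real.sqrt 3 / 2) := by
  ext <;>
    simp only [latticePt, xiv, Prod.fst_add, Prod.snd_add, Prod.smul_fst, Prod.smul_snd,
      smul_eq_mul] <;>
    ring

@[simp] lemma latticeA_latticePt (i j : ℝ) : latticeA (latticePt i j) = i := by
  have : Real.sqrt 3 ≠ 0 := by positivity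
  rw [latticeA_apply, latticePt_eq]
  field_simp
  ring

@[simp] lemma latticeB_latticePt (i j : ℝ) : latticeB (latticePt i j) = j := by
  have : Real.sqrt 3 ≠ 0 := by positivity
  rw [latticeB_apply, latticePt_eq]
  field_simp

lemma latticePt_latticeA_latticeB (z : Pt) : latticePt (latticeA z) (latticeB z) = z := by
  have : Real.sqrt 3 ≠ 0 := by positivity
  rw [latticeA_apply, latticeB_apply, latticePt_eq]
  ext
  · field_simp
    ring
  · field_simp

lemma latticePt_add (i j k l : ℝ) : latticePt i j + latticePt k l = latticePt (i + k) (j + l) := by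
  simp only [latticePt]
  module

def latticeAffine (a b r : ℝ) : Pt →ᵃ[ℝ] ℝ :=
  (a • latticeA + b • latticeB).toAffineMap + AffineMap.const ℝ Pt r

@[simp] lemma latticeAffine_apply (a b r : ℝ) (z : Pt) :
    latticeAffine a b r z = a * latticeA z + b * latticeB z + r := by
  simp [latticeAffine]

def upTri (i j : ℤ) : GridTriangle := ⟨latticePt i j, true⟩
def downTri (i j : ℤ) : GridTriangle := ⟨latticePt i j, false⟩

@[simp] lemma upTri_v0 (i j : ℤ) : (upTri i j).v0 = latticePt i j := rfl
@[simp] lemma upTri_v1 (i j : ℤ) : (upTri i j).v1 = latticePt (i + 1) j := by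
  simp only [GridTriangle.v1, upTri, latticePt, xiv]
  module
@[simp] lemma upTri_v2 (i j : ℤ) : (upTri i j).v2 = latticePt (i + 1) (j + 1) := by
  simp only [GridTriangle.v2, upTri, if_true, latticePt]
  module
@[simp] lemma downTri_v0 (i j : ℤ) : (downTri i j).v0 = latticePt i j := rfl
@[simp] lemma downTri_v1 (i j : ℤ) : (downTri i j).v1 = latticePt (i + 1) j := by
  simp only [GridTriangle.v1, downTri, latticePt, xiv]
  module
@[simp] lemma downTri_v2 (i j : ℤ) : (downTri i j).v2 = latticePt i (j - 1) := by
  simp only [GridTriangle.v2, downTri, Bool.false_eq_true, if_false, latticePt]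
  have : xiv 2 = -xiv 0 - xiv 1 := by ext <;> norm_num [xiv]
  rw [this]
  module

lemma mem_upTri_region {i j : ℤ} {z : Pt} : z ∈ (upTri i j).region ↔
    (j : ℝ) ≤ latticeB z ∧ latticeA z ≤ i + 1 ∧ (i - j : ℝ) ≤ latticeA z - latticeB z := by
  constructor
  · intro hz
    have hconv : Convex ℝ {z | (j : ℝ) ≤ latticeB z ∧ latticeA z ≤ i + 1 ∧
        (i - j : ℝ) ≤ latticeA z - latticeB z} :=
      (convex_halfSpace_ge latticeB.isLinear _).inter <|
        (convex_halfSpace_le latticeA.isLinear _).inter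
          (convex_halfSpace_ge (latticeA - latticeB).isLinear _)
    refine convexHull_min ?_ hconv hz
    simp only [Set.insert_subset_iff, Set.singleton_subset_iff, Set.mem_ofPred_eq, upTri_v0,
      upTri_v1, upTri_v2, latticeA_latticePt, latticeB_latticePt]
    refine ⟨⟨?_, ?_, ?_⟩, ⟨?_, ?_, ?_⟩, ⟨?_, ?_, ?_⟩⟩ <;> linarith
  · rintro ⟨h1, h2, h3⟩
    have hz : z = (i + 1 - latticeA z) • latticePt i j
        + (latticeA z - latticeB z - (i - j)) • latticePt (i + 1) j
        + (latticeB z - j) • latticePt (i + 1) (j + 1) := by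
      conv_lhs => rw [← latticePt_latticeA_latticeB z]
      simp only [latticePt]
      module
    rw [GridTriangle.region, upTri_v0, upTri_v1, upTri_v2, hz]
    exact add_add_smul_mem_convexHull (by linarith) (by linarith) (by linarith) (by ring)

lemma mem_downTri_region {i j : ℤ} {z : Pt} : z ∈ (downTri i j).region ↔
    latticeB z ≤ j ∧ (i : ℝ) ≤ latticeA z ∧ latticeA z - latticeB z ≤ i - j + 1 := by
  constructor
  · intro hz
    have hconv : Convex ℝ {z | latticeB z ≤ j ∧ (i : ℝ) ≤ latticeA z ∧
        latticeA z - latticeB z ≤ i - j + 1} :=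
      (convex_halfSpace_le latticeB.isLinear _).inter <|
        (convex_halfSpace_ge latticeA.isLinear _).inter
          (convex_halfSpace_le (latticeA - latticeB).isLinear _)
    refine convexHull_min ?_ hconv hz
    simp only [Set.insert_subset_iff, Set.singleton_subset_iff, Set.mem_ofPred_eq, downTri_v0,
      downTri_v1, downTri_v2, latticeA_latticePt, latticeB_latticePt]
    refine ⟨⟨?_, ?_, ?_⟩, ⟨?_, ?_, ?_⟩, ⟨?_, ?_, ?_⟩⟩ <;> linarith
  · rintro ⟨h1, h2, h3⟩
    have hz : z = (i - j + 1 - latticeA z + latticeB z) • latticePt i j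
        + (latticeA z - i) • latticePt (i + 1) j + (j - latticeB z) • latticePt i (j - 1) := by
      conv_lhs => rw [← latticePt_latticeA_latticeB z]
      simp only [latticePt]
      module
    rw [GridTriangle.region, downTri_v0, downTri_v1, downTri_v2, hz]
    exact add_add_smul_mem_convexHull (by linarith) (by linarith) (by linarith) (by ring)

namespace Counterexample

def hexagon : Set Pt :=
  {z | 0 ≤ latticeB z ∧ latticeB z ≤ 2 ∧ 0 ≤ latticeA z ∧ latticeA z ≤ 3 ∧
    -1 ≤ latticeA z - latticeB z ∧ latticeA z - latticeB z ≤ 2}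

lemma convex_hexagon : Convex ℝ hexagon :=
  (convex_halfSpace_ge latticeB.isLinear _).inter <|
    (convex_halfSpace_le latticeB.isLinear _).inter <|
    (convex_halfSpace_ge latticeA.isLinear _).inter <|
    (convex_halfSpace_le latticeA.isLinear _).inter <|
    (convex_halfSpace_ge (latticeA - latticeB).isLinear _).inter
      (convex_halfSpace_le (latticeA - latticeB).isLinear _)

def tris : Finset GridTriangle :=
  {upTri 0 0, upTri 0 1, downTri 0 1, upTri 1 0, upTri 1 1, downTri 1 1, downTri 1 2, upTri 2 1,
    downTri 2 1, downTri 2 2}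

lemma biUnion_region_tris : (⋃ T ∈ tris, T.region) = hexagon := by
  refine Set.Subset.antisymm (Set.iUnion₂_subset fun T hT z hz => ?_) fun z hz => ?_
  · simp only [tris, Finset.mem_insert, Finset.mem_singleton] at hT
    rcases hT with rfl | rfl | rfl | rfl | rfl | rfl | rfl | rfl | rfl | rfl <;>
    · simp only [mem_upTri_region, mem_downTri_region] at hz
      push_cast at hz
      refine ⟨?_, ?_, ?_, ?_, ?_, ?_⟩ <;> linarith
  obtain ⟨h1, h2, h3, h4, h5, h6⟩ := hz
  have up (i j : ℤ) (hT : upTri i j ∈ tris) (h : (j : ℝ) ≤ latticeB z ∧ latticeA z ≤ i + 1 ∧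
      (i - j : ℝ) ≤ latticeA z - latticeB z) : z ∈ ⋃ T ∈ tris, T.region :=
    Set.mem_biUnion hT (mem_upTri_region.2 h)
  have down (i j : ℤ) (hT : downTri i j ∈ tris) (h : latticeB z ≤ j ∧ (i : ℝ) ≤ latticeA z ∧
      latticeA z - latticeB z ≤ i - j + 1) : z ∈ ⋃ T ∈ tris, T.region :=
    Set.mem_biUnion hT (mem_downTri_region.2 h)
  rcases le_total (latticeB z) 1 with hβ | hβ <;>
    rcases le_total (latticeA z) (latticeB z) with hαβ | hαβ
  · exact down 0 1 (by simp [tris]) (by push_cast; refine ⟨?_, ?_, ?_⟩ <;> linarith)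
  · rcases le_total (latticeA z) (latticeB z + 1) with hαβ' | hαβ'
    · rcases le_total (latticeA z) 1 with hα | hα
      · exact up 0 0 (by simp [tris]) (by push_cast; refine ⟨?_, ?_, ?_⟩ <;> linarith)
      · exact down 1 1 (by simp [tris]) (by push_cast; refine ⟨?_, ?_, ?_⟩ <;> linarith)
    · rcases le_total (latticeA z) 2 with hα | hα
      · exact up 1 0 (by simp [tris]) (by push_cast; refine ⟨?_, ?_, ?_⟩ <;> linarith)
      · exact down 2 1 (by simp [tris]) (by push_cast; refine ⟨?_, ?_, ?_⟩ <;> linarith)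
  · rcases le_total (latticeA z) 1 with hα | hα
    · exact up 0 1 (by simp [tris]) (by push_cast; refine ⟨?_, ?_, ?_⟩ <;> linarith)
    · exact down 1 2 (by simp [tris]) (by push_cast; refine ⟨?_, ?_, ?_⟩ <;> linarith)
  · rcases le_total (latticeA z) (latticeB z + 1) with hαβ' | hαβ'
    · rcases le_total (latticeA z) 2 with hα | hα
      · exact up 1 1 (by simp [tris]) (by push_cast; refine ⟨?_, ?_, ?_⟩ <;> linarith)
      · exact down 2 2 (by simp [tris]) (by push_cast; refine ⟨?_, ?_, ?_⟩ <;> linarith)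
    · exact up 2 1 (by simp [tris]) (by push_cast; refine ⟨?_, ?_, ?_⟩ <;> linarith)

def grid : ConvexGrid where
  tris := tris
  nonempty := ⟨upTri 0 0, by simp [tris]⟩
  aligned T hT T' hT' := by
    have base : ∀ T ∈ tris, ∃ i j : ℤ, T.base = latticePt i j := by
      simp only [tris, Finset.forall_mem_insert, Finset.mem_singleton, forall_eq]
      exact ⟨⟨0, 0, rfl⟩, ⟨0, 1, rfl⟩, ⟨0, 1, rfl⟩, ⟨1, 0, rfl⟩, ⟨1, 1, rfl⟩, ⟨1, 1, rfl⟩,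
        ⟨1, 2, rfl⟩, ⟨2, 1, rfl⟩, ⟨2, 1, rfl⟩, ⟨2, 2, rfl⟩⟩
    obtain ⟨i, j, hij⟩ := base T hT
    obtain ⟨k, l, hkl⟩ := base T' hT'
    refine ⟨i - k, j - l, ?_⟩
    rw [hij, hkl, latticePt, latticePt]
    push_cast
    module
  convex := biUnion_region_tris ▸ convex_hexagon

lemma grid_region : grid.region = hexagon := biUnion_region_tris

def pieces : Finset (Pt →ᵃ[ℝ] ℝ) :=
  {latticeAffine 0 (1 / 2) 0, latticeAffine (1 / 2) (-1 / 2) (1 / 2), latticeAffine (1 / 2) 0 0,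
    latticeAffine (-1 / 2) (1 / 2) (1 / 2), latticeAffine (-1 / 2) (-1 / 2) (3 / 2),
    latticeAffine (-3 / 2) 0 3, latticeAffine (-3 / 2) (1 / 2) (5 / 2),
    latticeAffine (-1) (-1 / 2) (5 / 2)}

lemma pieces_nonempty : pieces.Nonempty := ⟨_, Finset.mem_insert_self _ _⟩

def potential (z : Pt) : ℝ := pieces.inf' pieces_nonempty fun φ => φ z

def cocirc (e : Ed) : ℝ := potential e.2 - potential e.1

lemma concaveOn_potential : ConcaveOn ℝ Set.univ potential :=
  pieces.concaveOn_inf'_affineMap pieces_nonempty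

lemma potential_eq_of_forall_le {φ : Pt →ᵃ[ℝ] ℝ} (hφ : φ ∈ pieces) {z : Pt}
    (h : ∀ ψ ∈ pieces, φ z ≤ ψ z) : potential z = φ z :=
  (Finset.inf'_le _ hφ).antisymm (Finset.le_inf' _ _ h)

lemma affineOn_potential : ∀ T ∈ tris, AffineOn potential T.region := by
  have of_piece (T : GridTriangle) (φ : Pt →ᵃ[ℝ] ℝ) (hφ : φ ∈ pieces)
      (hT : ∀ v ∈ ({T.v0, T.v1, T.v2} : Set Pt), ∀ ψ ∈ pieces, φ v ≤ ψ v) :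
      AffineOn potential T.region :=
    ⟨φ, concaveOn_potential.eqOn_convexHull_of_le (fun z => Finset.inf'_le _ hφ)
      fun v hv => potential_eq_of_forall_le hφ (hT v hv)⟩
  simp only [tris, Finset.forall_mem_insert, Finset.mem_singleton, forall_eq]
  refine ⟨of_piece _ (latticeAffine 0 (1 / 2) 0) ?_ ?_,
    of_piece _ (latticeAffine (1 / 2) (-1 / 2) (1 / 2)) ?_ ?_,
    of_piece _ (latticeAffine (1 / 2) 0 0) ?_ ?_,
    of_piece _ (latticeAffine (-1 / 2) (1 / 2) (1 / 2)) ?_ ?_,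
    of_piece _ (latticeAffine (-1 / 2) (-1 / 2) (3 / 2)) ?_ ?_,
    of_piece _ (latticeAffine (-1 / 2) (1 / 2) (1 / 2)) ?_ ?_,
    of_piece _ (latticeAffine (-1 / 2) (-1 / 2) (3 / 2)) ?_ ?_,
    of_piece _ (latticeAffine (-3 / 2) 0 3) ?_ ?_,
    of_piece _ (latticeAffine (-3 / 2) (1 / 2) (5 / 2)) ?_ ?_,
    of_piece _ (latticeAffine (-1) (-1 / 2) (5 / 2)) ?_ ?_⟩ <;>
  simp only [pieces, Finset.mem_insert, Finset.mem_singleton,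
    Set.forall_mem_insert, Set.mem_singleton_iff, forall_eq, upTri_v0, upTri_v1, upTri_v2,
    downTri_v0, downTri_v1, downTri_v2, latticeAffine_apply, latticeA_latticePt,
    latticeB_latticePt, true_or, or_true] <;>
  norm_num

lemma isConcaveCocirculation_cocirc : IsConcaveCocirculation grid cocirc :=
  ⟨fun T _ => by simp only [cocirc, GridTriangle.e0, GridTriangle.e1, GridTriangle.e2]; ring,
    potential, concaveOn_potential.subset (Set.subset_univ _) grid.convex, affineOn_potential,
    fun _ _ => rfl⟩

def integralEdges : Finset Ed :=
  {(latticePt 0 0, latticePt 0 1), (latticePt 0 0, latticePt 1 0), (latticePt 1 2, latticePt 0 1),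
    (latticePt 2 1, latticePt 1 0), (latticePt 2 2, latticePt 1 1), (latticePt 2 2, latticePt 3 2),
    (latticePt 3 1, latticePt 2 0), (latticePt 3 1, latticePt 3 2)}

lemma integralEdges_subset : integralEdges ⊆ grid.edges := by
  simp only [integralEdges, Finset.insert_subset_iff, Finset.singleton_subset_iff]
  norm_num [ConvexGrid.edges, grid, tris, GridTriangle.edgeFinset, GridTriangle.e0,
    GridTriangle.e1, GridTriangle.e2]

lemma exists_int_cocirc_eq : ∀ e ∈ integralEdges, ∃ n : ℤ, cocirc e = n := by
  simp only [integralEdges, Finset.forall_mem_insert, Finset.mem_singleton, forall_eq]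
  refine ⟨⟨0, ?_⟩, ⟨0, ?_⟩, ⟨0, ?_⟩, ⟨0, ?_⟩, ⟨1, ?_⟩, ⟨-1, ?_⟩, ⟨1, ?_⟩, ⟨0, ?_⟩⟩ <;>
  norm_num [cocirc, potential, pieces, Finset.inf'_insert]

lemma sub_potential_eq_of_mem_integralEdges {h' : Ed → ℝ} {g' : Pt → ℝ}
    (hpot : ∀ e ∈ grid.edges, h' e = g' e.2 - g' e.1)
    (hagree : ∀ e ∈ grid.edges, (∃ n : ℤ, cocirc e = n) → h' e = cocirc e) :
    ∀ e ∈ integralEdges, g' e.1 - potential e.1 = g' e.2 - potential e.2 := by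
  intro e he
  have hE := integralEdges_subset he
  have := (hpot e hE).symm.trans (hagree e hE (exists_int_cocirc_eq e he))
  rw [cocirc] at this
  linarith

lemma rhombus_le {g' : Pt → ℝ} (hconc : ConcaveOn ℝ grid.region g')
    (haff : ∀ T ∈ grid.tris, AffineOn g' T.region) :
    g' (latticePt 2 0) + g' (latticePt 1 1) ≤ g' (latticePt 1 0) + g' (latticePt 2 1) ∧
      g' (latticePt 2 1) + g' (latticePt 1 2) ≤ g' (latticePt 1 1) + g' (latticePt 2 2) := by
  constructor
  · refine hconc.add_le_of_affineOn (haff (upTri 1 0) (by simp [grid, tris]))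
      (convex_convexHull ℝ _) ?_ ?_ ?_ ?_ ?_ <;>
    norm_num [mem_upTri_region, grid_region, hexagon, latticePt_add]
  · refine hconc.add_le_of_affineOn (haff (upTri 1 1) (by simp [grid, tris]))
      (convex_convexHull ℝ _) ?_ ?_ ?_ ?_ ?_ <;>
    norm_num [mem_upTri_region, grid_region, hexagon, latticePt_add]

lemma potential_rhombus :
    potential (latticePt 2 0) + potential (latticePt 1 1) =
        potential (latticePt 1 0) + potential (latticePt 2 1) ∧
      potential (latticePt 2 1) + potential (latticePt 1 2) =
        potential (latticePt 1 1) + potential (latticePt 2 2) := by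
  norm_num [potential, pieces, Finset.inf'_insert]

lemma eq_cocirc_of_agree {h' : Ed → ℝ} (hh' : IsConcaveCocirculation grid h')
    (hagree : ∀ e ∈ grid.edges, (∃ n : ℤ, cocirc e = n) → h' e = cocirc e) :
    ∀ e ∈ grid.edges, h' e = cocirc e := by
  obtain ⟨-, g', hconc, haff, hpot⟩ := hh'
  have hflat := sub_potential_eq_of_mem_integralEdges hpot hagree
  simp only [integralEdges, Finset.forall_mem_insert, Finset.mem_singleton, forall_eq] at hflat
  obtain ⟨f1, f2, f3, f4, f5, f6, f7, f8⟩ := hflat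
  obtain ⟨r1, r2⟩ := rhombus_le hconc haff
  obtain ⟨p1, p2⟩ := potential_rhombus
  have hconst : ∀ T ∈ grid.tris, ∀ v ∈ ({T.v0, T.v1, T.v2} : Set Pt),
      g' v = potential v + (g' (latticePt 0 0) - potential (latticePt 0 0)) := by
    simp only [grid, tris, Finset.forall_mem_insert, Finset.mem_singleton, forall_eq,
      Set.forall_mem_insert, Set.mem_singleton_iff, upTri_v0, upTri_v1, upTri_v2, downTri_v0,
      downTri_v1, downTri_v2]
    norm_num
    constructorm* _ ∧ _ <;> linarith
  intro e he
  rw [hpot e he, grid.sub_eq_sub_of_eq_add_const hconst e he, cocirc]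

lemma exists_cocirc_not_integral : ∃ e ∈ grid.edges, ¬ ∃ n : ℤ, cocirc e = n := by
  refine ⟨(latticePt 0 1, latticePt 1 1), ?_, ?_⟩
  · norm_num [ConvexGrid.edges, grid, tris, GridTriangle.edgeFinset, GridTriangle.e0]
  · have half : cocirc (latticePt 0 1, latticePt 1 1) = 1 / 2 := by
      norm_num [cocirc, potential, pieces, Finset.inf'_insert]
    rintro ⟨n, hn⟩
    have : (2 * n : ℝ) = 1 := by linarith
    norm_cast at this
    omega

end Counterexample

/-- counterexample from the concluding remarks.  There are a convex
grid G and a non-integral concave cocirculation h in G which is the unique concave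
cocirculation agreeing with h on the set of edges where h is integral; in particular no
integer concave cocirculation agrees with h on all edges where h takes integer values. -/
theorem stmt15 :
    ∃ (G : ConvexGrid) (h : Ed → ℝ),
      IsConcaveCocirculation G h ∧
      (¬ ∀ e ∈ G.edges, ∃ z : ℤ, h e = (z : ℝ)) ∧
      (∀ h' : Ed → ℝ, IsConcaveCocirculation G h' →
        (∀ e ∈ G.edges, (∃ z : ℤ, h e = (z : ℝ)) → h' e = h e) →
        ∀ e ∈ G.edges, h' e = h e) ∧
      ¬ ∃ h' : Ed → ℝ, IsConcaveCocirculation G h' ∧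
          (∀ e ∈ G.edges, ∃ z : ℤ, h' e = (z : ℝ)) ∧
          ∀ e ∈ G.edges, (∃ z : ℤ, h e = (z : ℝ)) → h' e = h e := by
  obtain ⟨e, he, hnot⟩ := Counterexample.exists_cocirc_not_integral
  refine ⟨Counterexample.grid, Counterexample.cocirc,
    Counterexample.isConcaveCocirculation_cocirc, fun hint => hnot (hint e he),
    fun _ => Counterexample.eq_cocirc_of_agree, ?_⟩
  rintro ⟨h', hh', hint, hagree⟩
  rw [← Counterexample.eq_cocirc_of_agree hh' hagree e he] at hnot
  exact hnot (hint e he)
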